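/- Genocchi–Hermite formula: if U ⊆ ℂ is a convex domain, f is holomorphic on U, and n ≥ 0, then for all z = (z₁,…,z_{n+1}) ∈ U^{n+1}, f^[n](z) = ∫_{A_n} f^{(n)}(θ₁z₁ + ⋯ + θ_n z_n + (1−θ₁−⋯−θ_n)z_{n+1}) dθ₁⋯dθ_n, where A_n = {θ ∈ ℝⁿ : θⱼ ≥ 0, Σθⱼ ≤ 1} is the standard n-simplex and f^{(n)} is the n-th complex derivative. -/

import Mathlib

/-- A system of divided differences of `f` on `Ω`: `F k` is the `k`-th divided
difference `f^[k]`, holomorphic on `Ω^(k+1)`, agreeing with `f` for `k = 0` and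
satisfying the divided-difference recursion off the set `z₁ = z_{k+2}`. -/
def IsDividedDiffSystem (Ω : Set ℂ) (f : ℂ → ℂ)
    (F : ∀ k : ℕ, (Fin (k + 1) → ℂ) → ℂ) : Prop :=
  (∀ z : Fin 1 → ℂ, z 0 ∈ Ω → F 0 z = f (z 0)) ∧
  (∀ k, DifferentiableOn ℂ (F k) {z | ∀ j, z j ∈ Ω}) ∧
  (∀ k, ∀ z : Fin (k + 2) → ℂ, (∀ j, z j ∈ Ω) →
    z 0 ≠ z (Fin.last (k + 1)) →
    F (k + 1) z =
      (F k (fun j => z j.castSucc) - F k (fun j => z j.succ)) /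
        (z 0 - z (Fin.last (k + 1))))

/-!
Write `Gₙ g z = ∫_{Aₙ} g(θ₁z₁ + ⋯ + θₙzₙ + (1 - Σθ)z_{n+1}) dθ` (`simplexIntegral g z`). Slicing
`A_{n+1}` along the first coordinate and integrating `g'` over each slice by the fundamental
theorem of calculus gives
`(z₁ - z_{n+2}) • G_{n+1} g' z = Gₙ g (z₂, …, z_{n+1}, z₁) - Gₙ g (z₂, …, z_{n+2})`.
`Gₙ g` is invariant under cyclic relabelling of the nodes, because the affine map rotating the
barycentric coordinates `(θ, 1 - Σθ)` preserves both Lebesgue measure and `Aₙ`. Hence `Gₙ f⁽ⁿ⁾`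
satisfies the divided-difference recursion, so by induction it equals `f^[n]` off the diagonal
`z₁ = z_{n+2}`; both sides are continuous and the off-diagonal points are dense, which settles
the diagonal.
-/

open MeasureTheory Set

namespace GenocchiHermite

def cornerSimplex (n : ℕ) : Set (Fin n → ℝ) := {θ | (∀ j, 0 ≤ θ j) ∧ ∑ j, θ j ≤ 1}

noncomputable def simplexPoint {n : ℕ} (z : Fin (n + 1) → ℂ) (θ : Fin n → ℝ) : ℂ :=
  (∑ j : Fin n, (θ j : ℂ) * z j.castSucc) + ((1 - ∑ j, θ j : ℝ) : ℂ) * z (Fin.last n)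

theorem isClosed_cornerSimplex (n : ℕ) : IsClosed (cornerSimplex n) := by
  simp only [cornerSimplex, ofPred_and, ofPred_forall]
  exact (isClosed_iInter fun j => isClosed_le continuous_const (continuous_apply j)).inter
    (isClosed_le (by fun_prop) continuous_const)

theorem cornerSimplex_subset_pi_Icc (n : ℕ) : cornerSimplex n ⊆ univ.pi fun _ => Icc 0 1 :=
  fun _ ⟨h0, h1⟩ i _ =>
    ⟨h0 i, (Finset.single_le_sum (fun j _ => h0 j) (Finset.mem_univ i)).trans h1⟩

theorem isCompact_cornerSimplex (n : ℕ) : IsCompact (cornerSimplex n) :=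
  (isCompact_univ_pi fun _ => isCompact_Icc).of_isClosed_subset (isClosed_cornerSimplex n)
    (cornerSimplex_subset_pi_Icc n)

theorem cons_mem_cornerSimplex {n : ℕ} {t : ℝ} {η : Fin n → ℝ} :
    Fin.cons t η ∈ cornerSimplex (n + 1) ↔ η ∈ cornerSimplex n ∧ t ∈ Icc 0 (1 - ∑ i, η i) := by
  simp only [cornerSimplex, mem_ofPred_eq, Fin.forall_fin_succ, Fin.cons_zero, Fin.cons_succ,
    Fin.sum_cons, mem_Icc]
  constructor
  · rintro ⟨⟨ht, hη⟩, hsum⟩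
    exact ⟨⟨hη, by linarith⟩, ht, by linarith⟩
  · rintro ⟨⟨hη, -⟩, ht, hsum⟩
    exact ⟨⟨ht, hη⟩, by linarith⟩

theorem simplexPoint_eq_sum {n : ℕ} (z : Fin (n + 1) → ℂ) (θ : Fin n → ℝ) :
    simplexPoint z θ = ∑ j, (Fin.snoc θ (1 - ∑ i, θ i) : Fin (n + 1) → ℝ) j • z j := by
  simp [simplexPoint, Fin.sum_univ_castSucc, Complex.real_smul]

theorem simplexPoint_mem {n : ℕ} {U : Set ℂ} (hU : Convex ℝ U) {z : Fin (n + 1) → ℂ}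
    (hz : ∀ j, z j ∈ U) {θ : Fin n → ℝ} (hθ : θ ∈ cornerSimplex n) : simplexPoint z θ ∈ U := by
  rw [simplexPoint_eq_sum]
  refine hU.sum_mem (fun j _ => ?_) (by simp [Fin.sum_univ_castSucc]) (fun j _ => hz j)
  refine Fin.lastCases ?_ (fun i => ?_) j
  · simpa using hθ.2
  · simpa using hθ.1 i

theorem continuous_simplexPoint {n : ℕ} :
    Continuous fun p : (Fin (n + 1) → ℂ) × (Fin n → ℝ) => simplexPoint p.1 p.2 := by
  unfold simplexPoint; fun_prop

theorem simplexPoint_cons {n : ℕ} (z : Fin (n + 2) → ℂ) (t : ℝ) (η : Fin n → ℝ) :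
    simplexPoint z (Fin.cons t η) =
      simplexPoint (fun j => z j.succ) η + t • (z 0 - z (Fin.last (n + 1))) := by
  simp only [simplexPoint, Fin.sum_univ_succ, Fin.cons_zero, Fin.cons_succ,
    Complex.real_smul, Fin.succ_last, Fin.castSucc_zero, ← Fin.succ_castSucc]
  push_cast
  ring

theorem simplexPoint_succ_add {n : ℕ} (z : Fin (n + 2) → ℂ) (η : Fin n → ℝ) :
    simplexPoint (fun j => z j.succ) η + (1 - ∑ i, η i) • (z 0 - z (Fin.last (n + 1))) =
      simplexPoint ((fun j => z j.castSucc) ∘ finRotate (n + 1)) η := by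
  simp only [simplexPoint, Function.comp_apply, finRotate_last]
  simp only [finRotate_apply, Fin.coeSucc_eq_succ, Complex.real_smul, Fin.succ_last,
    Fin.castSucc_zero, ← Fin.succ_castSucc]
  push_cast
  ring

theorem measurableSet_cornerSimplex (n : ℕ) : MeasurableSet (cornerSimplex n) :=
  (isClosed_cornerSimplex n).measurableSet

theorem indicator_cornerSimplex_cons {E : Type*} [Zero E] {n : ℕ}
    (h : (Fin (n + 1) → ℝ) → E) (t : ℝ) (η : Fin n → ℝ) :
    (cornerSimplex (n + 1)).indicator h (Fin.cons t η) =
      (cornerSimplex n).indicator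
        (fun η => (Icc 0 (1 - ∑ i, η i)).indicator (fun t => h (Fin.cons t η)) t) η := by
  by_cases hη : η ∈ cornerSimplex n <;>
    simp [indicator, cons_mem_cornerSimplex, hη]

theorem setIntegral_cornerSimplex_succ {E : Type*} [NormedAddCommGroup E] [NormedSpace ℝ E]
    {n : ℕ} {h : (Fin (n + 1) → ℝ) → E} (hh : IntegrableOn h (cornerSimplex (n + 1))) :
    ∫ θ in cornerSimplex (n + 1), h θ =
      ∫ η in cornerSimplex n, ∫ t in (0 : ℝ)..1 - ∑ i, η i, h (Fin.cons t η) := by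
  have hmp := (volume_preserving_piFinSuccAbove (fun _ : Fin (n + 1) => ℝ) 0).symm
  have hcons : ∀ p : ℝ × (Fin n → ℝ),
      (MeasurableEquiv.piFinSuccAbove (fun _ => ℝ) 0).symm p = Fin.cons p.1 p.2 := fun p => by
    simp [MeasurableEquiv.piFinSuccAbove_symm_apply, Fin.insertNthEquiv, Fin.insertNth_zero']
  have hint : Integrable fun p : ℝ × (Fin n → ℝ) =>
      (cornerSimplex (n + 1)).indicator h (Fin.cons p.1 p.2) := by
    simp_rw [← hcons]
    exact hmp.integrable_comp_emb (MeasurableEquiv.measurableEmbedding _) |>.2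
      ((integrable_indicator_iff (measurableSet_cornerSimplex _)).2 hh)
  calc ∫ θ in cornerSimplex (n + 1), h θ
      = ∫ p : ℝ × (Fin n → ℝ), (cornerSimplex (n + 1)).indicator h (Fin.cons p.1 p.2) := by
        rw [← integral_indicator (measurableSet_cornerSimplex _), ← hmp.integral_comp']
        simp_rw [hcons]
    _ = ∫ η, ∫ t, (cornerSimplex (n + 1)).indicator h (Fin.cons t η) := integral_prod_symm _ hint
    _ = ∫ η in cornerSimplex n, ∫ t in (0 : ℝ)..1 - ∑ i, η i, h (Fin.cons t η) := by
        rw [← integral_indicator (measurableSet_cornerSimplex _)]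
        refine integral_congr_ae (Filter.Eventually.of_forall fun η => ?_)
        by_cases hη : η ∈ cornerSimplex n
        · have hs : 0 ≤ 1 - ∑ i, η i := sub_nonneg.2 hη.2
          simp only [indicator_cornerSimplex_cons, indicator_of_mem hη]
          rw [integral_indicator measurableSet_Icc, integral_Icc_eq_integral_Ioc,
            intervalIntegral.integral_of_le hs]
        · simp [indicator_cornerSimplex_cons, indicator_of_notMem hη]

theorem measurePreserving_cons_sub_tail {m : ℕ} {c : (Fin m → ℝ) → ℝ} (hc : Measurable c) :
    MeasurePreserving fun θ : Fin (m + 1) → ℝ =>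
      (Fin.cons (c (Fin.tail θ) - θ 0) (Fin.tail θ) : Fin (m + 1) → ℝ) := by
  have hE := volume_preserving_piFinSuccAbove (fun _ : Fin (m + 1) => ℝ) 0
  have hskew : MeasurePreserving fun p : (Fin m → ℝ) × ℝ => (p.1, c p.1 - p.2) :=
    (MeasurePreserving.id volume).skew_product (by fun_prop)
      (ae_of_all _ fun y => (Measure.measurePreserving_sub_left volume (c y)).map_eq)
  have hK : MeasurePreserving fun p : ℝ × (Fin m → ℝ) => (c p.2 - p.1, p.2) :=
    (Measure.measurePreserving_swap.comp hskew).comp Measure.measurePreserving_swap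
  convert hE.symm.comp (hK.comp hE) using 1
  funext θ
  simp [MeasurableEquiv.piFinSuccAbove_symm_apply, MeasurableEquiv.piFinSuccAbove_apply,
    Fin.insertNthEquiv, Fin.insertNth_zero']

theorem volume_preserving_comp_perm {ι α : Type*} [Fintype ι] [MeasureSpace α]
    [SigmaFinite (volume : Measure α)] (σ : Equiv.Perm ι) :
    MeasurePreserving fun θ : ι → α => θ ∘ σ := by
  have : (fun θ : ι → α => θ ∘ σ) = MeasurableEquiv.piCongrLeft (fun _ => α) σ.symm := by
    funext θ j
    simp [MeasurableEquiv.coe_piCongrLeft, Equiv.piCongrLeft_apply_eq_cast]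
  rw [this]
  exact volume_measurePreserving_piCongrLeft _ _

theorem finRotate_castSucc {m : ℕ} (i : Fin m) : finRotate (m + 1) i.castSucc = i.succ := by
  rw [finRotate_apply, Fin.coeSucc_eq_succ]

/-- In barycentric coordinates `(θ, 1 - Σθ)` this is the cyclic shift moving the last
coordinate to the front. -/
def cornerSimplexRotate {m : ℕ} (θ : Fin (m + 1) → ℝ) : Fin (m + 1) → ℝ :=
  Fin.cons (1 - ∑ j, θ j) (Fin.init θ)

theorem measurePreserving_cornerSimplexRotate (m : ℕ) :
    MeasurePreserving (cornerSimplexRotate (m := m)) := by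
  -- rotate the coordinates, then reflect the first one in `1 - (sum of the others)`
  convert (measurePreserving_cons_sub_tail (c := fun η : Fin m → ℝ => 1 - ∑ i, η i)
    (by fun_prop)).comp (volume_preserving_comp_perm (finRotate (m + 1)).symm) using 1
  funext θ
  have h0 : (finRotate (m + 1)).symm 0 = Fin.last m :=
    (Equiv.symm_apply_eq _).2 finRotate_last.symm
  have htail : Fin.tail (θ ∘ (finRotate (m + 1)).symm) = Fin.init θ := funext fun i =>
    congrArg θ ((Equiv.symm_apply_eq _).2 (finRotate_castSucc i).symm)
  simp only [cornerSimplexRotate, Function.comp_apply, htail, h0, Fin.sum_univ_castSucc θ,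
    Fin.init]
  ring_nf

theorem cornerSimplexRotate_injective (m : ℕ) :
    Function.Injective (cornerSimplexRotate (m := m)) := by
  intro θ θ' h
  have hinit : Fin.init θ = Fin.init θ' := congrArg Fin.tail h
  have hsum : ∑ j, θ j = ∑ j, θ' j := by
    simpa [cornerSimplexRotate] using congrFun h 0
  rw [Fin.sum_univ_castSucc, Fin.sum_univ_castSucc] at hsum
  funext j
  refine Fin.lastCases ?_ (fun i => congrFun hinit i) j
  have : ∀ i : Fin m, θ i.castSucc = θ' i.castSucc := congrFun hinit
  simp only [this] at hsum
  linarith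

theorem measurableEmbedding_cornerSimplexRotate (m : ℕ) :
    MeasurableEmbedding (cornerSimplexRotate (m := m)) :=
  (by unfold cornerSimplexRotate; fun_prop : Continuous _).measurableEmbedding
    (cornerSimplexRotate_injective m)

theorem cornerSimplexRotate_preimage (m : ℕ) :
    cornerSimplexRotate ⁻¹' cornerSimplex (m + 1) = cornerSimplex (m + 1) := by
  ext θ
  simp only [mem_preimage, cornerSimplexRotate, cons_mem_cornerSimplex]
  simp only [cornerSimplex, mem_ofPred_eq, Fin.forall_fin_succ', Fin.sum_univ_castSucc θ,
    Fin.init, mem_Icc]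
  constructor
  · rintro ⟨⟨h0, -⟩, h1, h2⟩
    exact ⟨⟨h0, by linarith⟩, by linarith⟩
  · rintro ⟨⟨h0, h1⟩, h2⟩
    have : 0 ≤ ∑ i : Fin m, θ i.castSucc := Finset.sum_nonneg fun i _ => h0 i
    exact ⟨⟨h0, by linarith⟩, by linarith, by linarith⟩

theorem simplexPoint_cornerSimplexRotate {m : ℕ} (v : Fin (m + 2) → ℂ)
    (θ : Fin (m + 1) → ℝ) :
    simplexPoint v (cornerSimplexRotate θ) = simplexPoint (v ∘ finRotate (m + 2)) θ := by
  rw [simplexPoint, simplexPoint,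
    Fin.sum_univ_succ fun j => ((cornerSimplexRotate θ j : ℝ) : ℂ) * v j.castSucc,
    Fin.sum_univ_castSucc fun j => (θ j : ℂ) * (v ∘ finRotate (m + 2)) j.castSucc]
  simp only [cornerSimplexRotate, Fin.sum_cons, Fin.cons_zero, Fin.cons_succ, Fin.init,
    Function.comp_apply, finRotate_last, finRotate_castSucc, Fin.succ_last, Fin.castSucc_zero,
    ← Fin.succ_castSucc, Fin.sum_univ_castSucc θ]
  push_cast
  ring

section SimplexIntegral

variable {E : Type*} [NormedAddCommGroup E]

noncomputable def simplexIntegral [NormedSpace ℝ E] {n : ℕ} (g : ℂ → E)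
    (z : Fin (n + 1) → ℂ) : E :=
  ∫ θ in cornerSimplex n, g (simplexPoint z θ)

theorem simplexIntegral_zero [NormedSpace ℝ E] [CompleteSpace E] (g : ℂ → E)
    (z : Fin 1 → ℂ) : simplexIntegral g z = g (z 0) := by
  simp only [simplexIntegral, simplexPoint, Finset.univ_eq_empty, Finset.sum_empty, sub_zero,
    Complex.ofReal_one, one_mul, zero_add]
  have : cornerSimplex 0 = univ := by simp [cornerSimplex]
  rw [this, setIntegral_const, measureReal_def, volume_pi, Measure.pi_univ]
  simp

theorem simplexIntegral_comp_finRotate [NormedSpace ℝ E] {n : ℕ} (g : ℂ → E)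
    (v : Fin (n + 1) → ℂ) : simplexIntegral g (v ∘ finRotate (n + 1)) = simplexIntegral g v := by
  cases n with
  | zero => simp
  | succ m =>
    calc simplexIntegral g (v ∘ finRotate (m + 2))
        = ∫ θ in cornerSimplexRotate ⁻¹' cornerSimplex (m + 1),
            g (simplexPoint v (cornerSimplexRotate θ)) := by
          simp only [cornerSimplexRotate_preimage, simplexPoint_cornerSimplexRotate,
            simplexIntegral]
      _ = simplexIntegral g v :=
          (measurePreserving_cornerSimplexRotate m).setIntegral_preimage_emb
            (measurableEmbedding_cornerSimplexRotate m) (fun θ => g (simplexPoint v θ)) _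

theorem integrableOn_cornerSimplex {n : ℕ} {U : Set ℂ} (hU : Convex ℝ U)
    {g : ℂ → E} (hg : ContinuousOn g U) {z : Fin (n + 1) → ℂ} (hz : ∀ j, z j ∈ U) :
    IntegrableOn (fun θ => g (simplexPoint z θ)) (cornerSimplex n) :=
  (hg.comp (continuous_simplexPoint.comp (Continuous.prodMk_right z)).continuousOn
    fun _ hθ => simplexPoint_mem hU hz hθ).integrableOn_compact (isCompact_cornerSimplex n)

theorem intervalIntegral_smul_deriv_line [NormedSpace ℂ E] [CompleteSpace E] {g g' : ℂ → E}
    {c d : ℂ} {s : ℝ} (hg : ∀ t ∈ uIcc 0 s, HasDerivAt g (g' (c + t • d)) (c + t • d))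
    (hg' : ContinuousOn (fun t : ℝ => g' (c + t • d)) (uIcc 0 s)) :
    ∫ t in (0 : ℝ)..s, d • g' (c + t • d) = g (c + s • d) - g c := by
  have hline (t : ℝ) : HasDerivAt (fun t : ℝ => c + t • d) d t := by
    simpa using ((hasDerivAt_id t).smul_const d).const_add c
  simpa using intervalIntegral.integral_eq_sub_of_hasDerivAt
    (fun t ht => (hg t ht).scomp t (hline t)) (hg'.const_smul d).intervalIntegrable

theorem smul_simplexIntegral_succ [NormedSpace ℂ E] [CompleteSpace E] {U : Set ℂ}
    (hU : Convex ℝ U) {g g' : ℂ → E} (hg : ∀ x ∈ U, HasDerivAt g (g' x) x)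
    (hg' : ContinuousOn g' U) {n : ℕ} {z : Fin (n + 2) → ℂ} (hz : ∀ j, z j ∈ U) :
    (z 0 - z (Fin.last (n + 1))) • simplexIntegral g' z =
      simplexIntegral g (fun j => z j.castSucc) - simplexIntegral g (fun j => z j.succ) := by
  set d := z 0 - z (Fin.last (n + 1))
  have hgc : ContinuousOn g U := fun x hx => (hg x hx).continuousAt.continuousWithinAt
  have hfiber : ∀ η ∈ cornerSimplex n,
      ∫ t in (0 : ℝ)..1 - ∑ i, η i, d • g' (simplexPoint z (Fin.cons t η)) =
        g (simplexPoint ((fun j => z j.castSucc) ∘ finRotate (n + 1)) η) -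
          g (simplexPoint (fun j => z j.succ) η) := by
    intro η hη
    have hmem : ∀ t ∈ uIcc 0 (1 - ∑ i, η i),
        simplexPoint (fun j => z j.succ) η + t • d ∈ U := by
      intro t ht
      rw [uIcc_of_le (sub_nonneg.2 hη.2)] at ht
      rw [← simplexPoint_cons]
      exact simplexPoint_mem hU hz (cons_mem_cornerSimplex.2 ⟨hη, ht⟩)
    simp_rw [simplexPoint_cons]
    rw [intervalIntegral_smul_deriv_line (fun t ht => hg _ (hmem t ht))
      (hg'.comp (by fun_prop) hmem), simplexPoint_succ_add]
  calc d • simplexIntegral g' z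
      = ∫ θ in cornerSimplex (n + 1), d • g' (simplexPoint z θ) := (integral_smul _ _).symm
    _ = ∫ η in cornerSimplex n, ∫ t in (0 : ℝ)..1 - ∑ i, η i,
          d • g' (simplexPoint z (Fin.cons t η)) :=
        setIntegral_cornerSimplex_succ ((integrableOn_cornerSimplex hU hg' hz).smul d)
    _ = ∫ η in cornerSimplex n,
          (g (simplexPoint ((fun j => z j.castSucc) ∘ finRotate (n + 1)) η) -
            g (simplexPoint (fun j => z j.succ) η)) :=
        setIntegral_congr_fun (measurableSet_cornerSimplex n) hfiber
    _ = simplexIntegral g ((fun j => z j.castSucc) ∘ finRotate (n + 1)) -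
          simplexIntegral g (fun j => z j.succ) :=
        integral_sub (integrableOn_cornerSimplex hU hgc fun j => hz _)
          (integrableOn_cornerSimplex hU hgc fun j => hz _)
    _ = simplexIntegral g (fun j => z j.castSucc) - simplexIntegral g (fun j => z j.succ) := by
        rw [simplexIntegral_comp_finRotate]

end SimplexIntegral

theorem continuousOn_setIntegral_of_continuousOn_prod {X Y E : Type*} [TopologicalSpace X]
    [TopologicalSpace Y] [T2Space Y] [MeasurableSpace Y] [OpensMeasurableSpace Y]
    {μ : Measure Y} [IsFiniteMeasureOnCompacts μ] [NormedAddCommGroup E] [NormedSpace ℝ E]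
    {f : X → Y → E} {s : Set X} {k : Set Y} (hk : IsCompact k)
    (hf : ContinuousOn (Function.uncurry f) (s ×ˢ k)) :
    ContinuousOn (fun x => ∫ y in k, f x y ∂μ) s := by
  have hint : ∀ p ∈ s, IntegrableOn (f p) k μ := fun p hp =>
    (hf.comp (Continuous.prodMk_right p).continuousOn fun _ hy => ⟨hp, hy⟩).integrableOn_compact hk
  intro q hq
  rw [Metric.continuousWithinAt_iff']
  intro ε hε
  obtain ⟨δ, hδ, hδε⟩ := exists_pos_mul_lt hε (μ.real k)
  obtain ⟨v, hv, hvk⟩ := hk.mem_uniformity_of_prod hf hq (Metric.dist_mem_uniformity hδ)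
  filter_upwards [hv, self_mem_nhdsWithin] with p hpv hps
  rw [dist_eq_norm, ← integral_sub (hint p hps) (hint q hq)]
  calc ‖∫ y in k, f p y - f q y ∂μ‖ ≤ δ * μ.real k :=
        norm_setIntegral_le_of_norm_le_const hk.measure_lt_top fun y hy =>
          (dist_eq_norm (f p y) (f q y)).symm.trans_le (hvk p hpv y hy).le
    _ < ε := by rwa [mul_comm]

theorem dense_setOf_apply_ne {𝕜 ι : Type*} [NontriviallyNormedField 𝕜] [CompleteSpace 𝕜]
    [Fintype ι] [DecidableEq ι] {i j : ι} (hij : i ≠ j) : Dense {z : ι → 𝕜 | z i ≠ z j} := by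
  let L : (ι → 𝕜) →L[𝕜] 𝕜 :=
    ContinuousLinearMap.proj (R := 𝕜) (φ := fun _ => 𝕜) i -
      ContinuousLinearMap.proj (R := 𝕜) (φ := fun _ => 𝕜) j
  have hL : Function.Surjective L := fun c => ⟨Pi.single i c, by simp [L, hij.symm]⟩
  have hne : {z : ι → 𝕜 | z i ≠ z j} = L ⁻¹' {0}ᶜ := by
    ext z
    simp [L, sub_eq_zero]
  rw [hne]
  exact (dense_compl_singleton 0).preimage (L.isOpenMap hL)

theorem hasDerivAt_iteratedDerivWithin_of_isOpen {E : Type*} [NormedAddCommGroup E]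
    [NormedSpace ℂ E] [CompleteSpace E] {U : Set ℂ} (hU : IsOpen U) {f : ℂ → E}
    (hf : DifferentiableOn ℂ f U) (k : ℕ) {x : ℂ} (hx : x ∈ U) :
    HasDerivAt (iteratedDerivWithin k f U) (iteratedDerivWithin (k + 1) f U x) x := by
  have hk : DifferentiableOn ℂ (iteratedDerivWithin k f U) U :=
    (hf.contDiffOn hU (n := ⊤)).differentiableOn_iteratedDerivWithin
      (by exact_mod_cast WithTop.coe_lt_top _) hU.uniqueDiffOn
  rw [iteratedDerivWithin_succ, derivWithin_of_isOpen hU hx]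
  exact (hk.differentiableAt (hU.mem_nhds hx)).hasDerivAt

end GenocchiHermite

open GenocchiHermite

theorem IsDividedDiffSystem.eqOn_simplexIntegral {U : Set ℂ} (hU : IsOpen U)
    (hUc : Convex ℝ U) {f : ℂ → ℂ} (hf : DifferentiableOn ℂ f U)
    {F : ∀ k : ℕ, (Fin (k + 1) → ℂ) → ℂ} (hF : IsDividedDiffSystem U f F) (n : ℕ) :
    EqOn (F n) (simplexIntegral (iteratedDerivWithin n f U)) {z | ∀ j, z j ∈ U} := by
  obtain ⟨hF0, hFdiff, hFrec⟩ := hF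
  have hD (k : ℕ) : ∀ x ∈ U,
      HasDerivAt (iteratedDerivWithin k f U) (iteratedDerivWithin (k + 1) f U x) x :=
    fun x hx => hasDerivAt_iteratedDerivWithin_of_isOpen hU hf k hx
  have hDcont (k : ℕ) : ContinuousOn (iteratedDerivWithin k f U) U :=
    fun x hx => (hD k x hx).continuousAt.continuousWithinAt
  induction n with
  | zero =>
    intro z hz
    rw [hF0 z (hz 0), simplexIntegral_zero, iteratedDerivWithin_zero]
  | succ n ih =>
    have hΩ : IsOpen {z : Fin (n + 2) → ℂ | ∀ j, z j ∈ U} := by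
      simpa [Set.pi] using isOpen_set_pi finite_univ fun (_ : Fin (n + 2)) _ => hU
    have hoff : EqOn (F (n + 1)) (simplexIntegral (iteratedDerivWithin (n + 1) f U))
        ({z | ∀ j, z j ∈ U} ∩ {z | z 0 ≠ z (Fin.last (n + 1))}) := by
      rintro z ⟨hz, hne⟩
      rw [hFrec n z hz hne, ih fun j => hz _, ih fun j => hz _,
        ← smul_simplexIntegral_succ hUc (hD n) (hDcont (n + 1)) hz, smul_eq_mul,
        mul_div_cancel_left₀ _ (sub_ne_zero.2 hne)]
    have hdense := dense_setOf_apply_ne (𝕜 := ℂ) (Fin.last_pos.ne : (0 : Fin (n + 2)) ≠ _)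
    refine hoff.of_subset_closure (hFdiff (n + 1)).continuousOn ?_ inter_subset_left
      (hdense.open_subset_closure_inter hΩ)
    exact continuousOn_setIntegral_of_continuousOn_prod (isCompact_cornerSimplex _)
      ((hDcont (n + 1)).comp continuous_simplexPoint.continuousOn
        fun p hp => simplexPoint_mem hUc hp.1 hp.2)

/-- Genocchi–Hermite formula.  For a convex domain `U ⊆ ℂ`, a
holomorphic `f` on `U` and `z ∈ U^(n+1)`,
`f^[n](z) = ∫_{Aₙ} f⁽ⁿ⁾(θ₁z₁+⋯+θₙzₙ+(1-Σθ)z_{n+1}) dθ`, the integral being over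
the corner simplex `Aₙ = {θ ∈ ℝⁿ : θⱼ ≥ 0, Σθⱼ ≤ 1}` with Lebesgue measure. -/
theorem genocchi_hermite
    (U : Set ℂ) (hU : IsOpen U) (hUc : Convex ℝ U)
    (f : ℂ → ℂ) (hf : DifferentiableOn ℂ f U)
    (F : ∀ k : ℕ, (Fin (k + 1) → ℂ) → ℂ) (hF : IsDividedDiffSystem U f F)
    (n : ℕ) (z : Fin (n + 1) → ℂ) (hz : ∀ j, z j ∈ U) :
    F n z =
      ∫ θ in {θ : Fin n → ℝ | (∀ j, 0 ≤ θ j) ∧ ∑ j, θ j ≤ 1},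
        iteratedDerivWithin n f U
          ((∑ j : Fin n, (θ j : ℂ) * z j.castSucc) +
            ((1 - ∑ j, θ j : ℝ) : ℂ) * z (Fin.last n)) :=
  hF.eqOn_simplexIntegral hU hUc hf n hz
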